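/- Let a, b be positive semidefinite n×n complex matrices and define a * b = (b^{1/2} a b^{1/2})^{1/2} using positive semidefinite square roots. Then (a*b)² and (b*a)² have the same nonzero spectrum, and hence trace(a*b) = trace(b*a). -/

import Mathlib

open ComplexOrder Matrix

variable {n : Type*} [Fintype n] [DecidableEq n]

open scoped Classical in
/-- The positive semidefinite square root (junk value `0` if the input is not PSD). -/
noncomputable def psqrt (A : Matrix n n ℂ) : Matrix n n ℂ :=
  if h : A.PosSemidef then
    (h.1.eigenvectorUnitary : Matrix n n ℂ) * diagonal ((↑) ∘ Real.sqrt ∘ h.1.eigenvalues) *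
      (star h.1.eigenvectorUnitary : Matrix n n ℂ)
  else 0

/-- The square root of a PSD matrix (replacement for the removed Mathlib definition). -/
noncomputable def Matrix.PosSemidef.sqrt {A : Matrix n n ℂ} (hA : A.PosSemidef) : Matrix n n ℂ :=
  (hA.1.eigenvectorUnitary : Matrix n n ℂ) * diagonal ((↑) ∘ Real.sqrt ∘ hA.1.eigenvalues) *
    (star hA.1.eigenvectorUnitary : Matrix n n ℂ)

lemma Matrix.PosSemidef.sqrt_mul_self {A : Matrix n n ℂ} (hA : A.PosSemidef) :
    hA.sqrt * hA.sqrt = A := by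
  have hVV' : star (hA.1.eigenvectorUnitary : Matrix n n ℂ) * (hA.1.eigenvectorUnitary : Matrix n n ℂ) = 1 :=
    Matrix.mem_unitaryGroup_iff'.mp hA.1.eigenvectorUnitary.2
  have hD : diagonal ((↑) ∘ Real.sqrt ∘ hA.1.eigenvalues : n → ℂ)
      * diagonal ((↑) ∘ Real.sqrt ∘ hA.1.eigenvalues) = diagonal (RCLike.ofReal ∘ hA.1.eigenvalues) := by
    rw [diagonal_mul_diagonal]
    congr 1
    funext i
    simp [← Complex.ofReal_mul, Real.mul_self_sqrt (hA.eigenvalues_nonneg i)]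
  conv_rhs => rw [hA.1.spectral_theorem, Unitary.conjStarAlgAut_apply]
  rw [Matrix.PosSemidef.sqrt]
  calc _ = (hA.1.eigenvectorUnitary : Matrix n n ℂ) * (diagonal ((↑) ∘ Real.sqrt ∘ hA.1.eigenvalues : n → ℂ)
        * (star (hA.1.eigenvectorUnitary : Matrix n n ℂ) * (hA.1.eigenvectorUnitary : Matrix n n ℂ))
        * diagonal ((↑) ∘ Real.sqrt ∘ hA.1.eigenvalues)) * star (hA.1.eigenvectorUnitary : Matrix n n ℂ) := by
        simp only [mul_assoc]
    _ = _ := by rw [hVV', Matrix.mul_one, hD]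

lemma Matrix.PosSemidef.sq_sqrt {A : Matrix n n ℂ} (hA : A.PosSemidef) : hA.sqrt ^ 2 = A := by
  rw [sq, hA.sqrt_mul_self]

lemma Matrix.PosSemidef.posSemidef_sqrt {A : Matrix n n ℂ} (hA : A.PosSemidef) :
    hA.sqrt.PosSemidef := by
  rw [Matrix.PosSemidef.sqrt, star_eq_conjTranspose]
  apply PosSemidef.mul_mul_conjTranspose_same
  rw [posSemidef_diagonal_iff]
  intro i
  simp [Real.sqrt_nonneg]

/-- The quantum fidelity product `a * b = (b^(1/2) a b^(1/2))^(1/2)`. -/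
noncomputable def fid (a b : Matrix n n ℂ) : Matrix n n ℂ :=
  psqrt (psqrt b * a * psqrt b)

open Polynomial Finset in
lemma psqrt_of {A : Matrix n n ℂ} (hA : A.PosSemidef) : psqrt A = hA.sqrt := dif_pos hA

open Polynomial in
lemma charpoly_eval' (M : Matrix n n ℂ) (z : ℂ) :
    M.charpoly.eval z = (z • (1 : Matrix n n ℂ) - M).det := by
  rw [Matrix.charpoly, eval_det, matPolyEquiv_charmatrix]
  simp only [eval_sub, eval_X, eval_C]
  congr 1
  ext i j
  simp [Matrix.scalar, Matrix.smul_apply, Matrix.one_apply, Matrix.diagonal, Pi.algebraMap_apply]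

open Polynomial in
lemma charpoly_mul_comm' (X Y : Matrix n n ℂ) : (X * Y).charpoly = (Y * X).charpoly := by
  apply Polynomial.eq_of_infinite_eval_eq
  refine ((Set.finite_singleton (0 : ℂ)).infinite_compl).mono ?_
  intro z hz
  have hz' : z ≠ 0 := hz
  simp only [Set.mem_setOf_eq]
  rw [charpoly_eval', charpoly_eval']
  have h1 : z • (1 : Matrix n n ℂ) - X * Y = z • (1 - (z⁻¹ • X) * Y) := by
    rw [smul_sub, smul_mul_assoc, smul_smul, mul_inv_cancel₀ hz', one_smul]
  have h2 : z • (1 : Matrix n n ℂ) - Y * X = z • (1 - Y * (z⁻¹ • X)) := by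
    rw [smul_sub, mul_smul_comm, smul_smul, mul_inv_cancel₀ hz', one_smul]
  rw [h1, h2, det_smul, det_smul, Matrix.det_one_sub_mul_comm]

open Polynomial in
lemma roots_charpoly' {A : Matrix n n ℂ} (hA : A.IsHermitian) :
    A.charpoly.roots = Finset.univ.val.map (fun i => (hA.eigenvalues i : ℂ)) := by
  have key : A.charpoly =
      ((Finset.univ.val.map (fun i => (hA.eigenvalues i : ℂ))).map (fun a => X - C a)).prod := by
    apply Polynomial.funext
    intro z
    rw [charpoly_eval', Polynomial.eval_multiset_prod, Multiset.map_map, Multiset.map_map]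
    simp only [Function.comp, eval_sub, eval_X, eval_C]
    have hVV : (hA.eigenvectorUnitary : Matrix n n ℂ) * star (hA.eigenvectorUnitary : Matrix n n ℂ) = 1 :=
      Matrix.mem_unitaryGroup_iff.mp hA.eigenvectorUnitary.2
    have hD : z • (1 : Matrix n n ℂ) - A
        = (hA.eigenvectorUnitary : Matrix n n ℂ) * (z • 1 - diagonal (RCLike.ofReal ∘ hA.eigenvalues))
          * star (hA.eigenvectorUnitary : Matrix n n ℂ) := by
      rw [Matrix.mul_sub, Matrix.sub_mul, mul_smul_comm, mul_one, smul_mul_assoc, hVV]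
      conv_lhs => rw [hA.spectral_theorem, Unitary.conjStarAlgAut_apply]
    rw [hD, det_mul, det_mul]
    have hdet1 : det (hA.eigenvectorUnitary : Matrix n n ℂ)
        * det (star (hA.eigenvectorUnitary : Matrix n n ℂ)) = 1 := by
      rw [← det_mul, hVV, det_one]
    have hdiag : z • (1 : Matrix n n ℂ) - diagonal (RCLike.ofReal ∘ hA.eigenvalues)
        = diagonal (fun i => z - (hA.eigenvalues i : ℂ)) := by
      rw [← diagonal_one, ← diagonal_smul, diagonal_sub]
      funext i
      simp
    rw [mul_comm (det _), mul_assoc, hdet1, mul_one, hdiag, det_diagonal]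
    rw [Finset.prod_eq_multiset_prod]
  rw [key, roots_multiset_prod_X_sub_C]

lemma trace_psqrt' {A : Matrix n n ℂ} (hA : A.PosSemidef) :
    (psqrt A).trace = ∑ i, ((Real.sqrt (hA.1.eigenvalues i) : ℂ)) := by
  rw [psqrt_of hA, Matrix.PosSemidef.sqrt]
  rw [Matrix.trace_mul_cycle]
  have hVV' : star (hA.1.eigenvectorUnitary : Matrix n n ℂ) * (hA.1.eigenvectorUnitary : Matrix n n ℂ) = 1 :=
    Matrix.mem_unitaryGroup_iff'.mp hA.1.eigenvectorUnitary.2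
  rw [hVV', Matrix.one_mul, Matrix.trace_diagonal]
  rfl

lemma trace_psqrt_congr' {A B : Matrix n n ℂ} (hA : A.PosSemidef) (hB : B.PosSemidef)
    (h : A.charpoly = B.charpoly) : (psqrt A).trace = (psqrt B).trace := by
  have hroots := congrArg Polynomial.roots h
  rw [roots_charpoly' hA.1, roots_charpoly' hB.1] at hroots
  have hmul : Finset.univ.val.map hA.1.eigenvalues = Finset.univ.val.map hB.1.eigenvalues := by
    apply Multiset.map_injective Complex.ofReal_injective
    rwa [Multiset.map_map, Multiset.map_map]
  rw [trace_psqrt' hA, trace_psqrt' hB]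
  calc ∑ i, ((Real.sqrt (hA.1.eigenvalues i) : ℂ))
      = ((Finset.univ.val.map hA.1.eigenvalues).map (fun r => ((Real.sqrt r : ℂ)))).sum := by
        rw [Multiset.map_map]; rfl
    _ = ((Finset.univ.val.map hB.1.eigenvalues).map (fun r => ((Real.sqrt r : ℂ)))).sum := by
        rw [hmul]
    _ = ∑ i, ((Real.sqrt (hB.1.eigenvalues i) : ℂ)) := by rw [Multiset.map_map]; rfl

theorem stmt5 (a b : Matrix n n ℂ) (ha : a.PosSemidef) (hb : b.PosSemidef) :
    spectrum ℂ ((fid a b) ^ 2) \ {0} = spectrum ℂ ((fid b a) ^ 2) \ {0} ∧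
    (fid a b).trace = (fid b a).trace := by
  have h1 : (hb.sqrt * a * hb.sqrt).PosSemidef := by
    have := ha.mul_mul_conjTranspose_same hb.sqrt
    rwa [hb.posSemidef_sqrt.1] at this
  have h2 : (ha.sqrt * b * ha.sqrt).PosSemidef := by
    have := hb.mul_mul_conjTranspose_same ha.sqrt
    rwa [ha.posSemidef_sqrt.1] at this
  have e1 : (fid a b) ^ 2 = hb.sqrt * a * hb.sqrt := by
    rw [fid, psqrt_of hb, psqrt_of h1, h1.sq_sqrt]
  have e2 : (fid b a) ^ 2 = ha.sqrt * b * ha.sqrt := by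
    rw [fid, psqrt_of ha, psqrt_of h2, h2.sq_sqrt]
  have d1 : hb.sqrt * a * hb.sqrt = (hb.sqrt * ha.sqrt) * (ha.sqrt * hb.sqrt) := by
    nth_rewrite 1 [← ha.sqrt_mul_self]
    noncomm_ring
  have d2 : ha.sqrt * b * ha.sqrt = (ha.sqrt * hb.sqrt) * (hb.sqrt * ha.sqrt) := by
    nth_rewrite 1 [← hb.sqrt_mul_self]
    noncomm_ring
  constructor
  · rw [e1, e2, d1, d2]
    exact spectrum.nonzero_mul_comm _ _
  · show (psqrt (psqrt b * a * psqrt b)).trace = (psqrt (psqrt a * b * psqrt a)).trace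
    rw [psqrt_of hb, psqrt_of ha]
    apply trace_psqrt_congr' h1 h2
    rw [d1, d2]
    exact charpoly_mul_comm' _ _
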